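/- Let k ≥ 1, let a : ℕ → ℂ be a k-periodic sequence, let x : ℕ → ℂ satisfy x_{n+2} = a_n x_{n+1} + x_n for all n ≥ 0, and let C_k be the monodromy matrix. Suppose there exist complex numbers Φ⁻, Φ⁺ with |Φ⁻| < |Φ⁺| and an invertible 2×2 complex matrix J with C_k = J · diag(Φ⁻, Φ⁺) · J⁻¹. Set β = J_{1,2} ((J⁻¹)_{2,1} x_1 + (J⁻¹)_{2,2} x_0) and γ = J_{2,2} ((J⁻¹)_{2,1} x_1 + (J⁻¹)_{2,2} x_0), and assume γ ≠ 0. Then x_{nk} ≠ 0 for all sufficiently large n, and the ratios x_{nk+1} / x_{nk} converge to β/γ as n → ∞. -/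

import Mathlib

/-!
By periodicity the transfer matrix over `n` periods is `C_k ^ n = J · diag(Φ⁻ⁿ, Φ⁺ⁿ) · J⁻¹`, so
both `x_{nk+1}` and `x_{nk}` have the form `Φ⁻ⁿ u + Φ⁺ⁿ v`, with `v = β` resp. `v = γ`.
Dividing by `Φ⁺ⁿ`, the first term tends to `0` because `|Φ⁻ / Φ⁺| < 1`; hence `x_{nk} / Φ⁺ⁿ → γ ≠ 0`
and the ratio tends to `β / γ`.
-/

/-- The `i`-th Fibonacci matrix. -/
def fibMat (a : ℕ → ℂ) (i : ℕ) : Matrix (Fin 2) (Fin 2) ℂ :=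
  !![a i, 1; 1, 0]

/-- The product `C n = A_{n-1} ⋯ A_1 A_0` of Fibonacci matrices. -/
noncomputable def fibProd (a : ℕ → ℂ) : ℕ → Matrix (Fin 2) (Fin 2) ℂ
  | 0 => 1
  | n + 1 => fibMat a n * fibProd a n

open Filter Topology Matrix

section Asymptotics

variable {𝕜 : Type*} [NormedField 𝕜] {r s : 𝕜}

lemma tendsto_pow_mul_add_pow_mul_div_pow (hrs : ‖r‖ < ‖s‖) (u g : 𝕜) :
    Tendsto (fun n : ℕ => (r ^ n * u + s ^ n * g) / s ^ n) atTop (𝓝 g) := by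
  have hs : s ≠ 0 := norm_pos_iff.mp ((norm_nonneg r).trans_lt hrs)
  have hq : Tendsto (fun n : ℕ => (r / s) ^ n) atTop (𝓝 0) :=
    tendsto_pow_atTop_nhds_zero_of_norm_lt_one <| by
      rwa [norm_div, div_lt_one (norm_pos_iff.mpr hs)]
  have hsplit : ∀ n : ℕ, (r ^ n * u + s ^ n * g) / s ^ n = (r / s) ^ n * u + g := by
    intro n
    rw [div_pow]
    field_simp
  simpa [hsplit] using (hq.mul_const u).add_const g

lemma eventually_pow_mul_add_pow_mul_ne_zero (hrs : ‖r‖ < ‖s‖) (u : 𝕜) {g : 𝕜} (hg : g ≠ 0) :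
    ∀ᶠ n : ℕ in atTop, r ^ n * u + s ^ n * g ≠ 0 :=
  ((tendsto_pow_mul_add_pow_mul_div_pow hrs u g).eventually_ne hg).mono
    fun n hn h => hn (by rw [h, zero_div])

lemma tendsto_pow_mul_add_pow_mul_div (hrs : ‖r‖ < ‖s‖) (u v b : 𝕜) {g : 𝕜} (hg : g ≠ 0) :
    Tendsto (fun n : ℕ => (r ^ n * v + s ^ n * b) / (r ^ n * u + s ^ n * g)) atTop
      (𝓝 (b / g)) := by
  have hs : s ≠ 0 := norm_pos_iff.mp ((norm_nonneg r).trans_lt hrs)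
  refine ((tendsto_pow_mul_add_pow_mul_div_pow hrs v b).div
    (tendsto_pow_mul_add_pow_mul_div_pow hrs u g) hg).congr fun n => ?_
  exact div_div_div_cancel_right₀ (pow_ne_zero n hs) _ _

end Asymptotics

lemma Matrix.fin_two_diagonal_pow {R : Type*} [CommRing R] (p q : R) (n : ℕ) :
    !![p, 0; 0, q] ^ n = !![p ^ n, 0; 0, q ^ n] := by
  induction n with
  | zero => rw [pow_zero, one_fin_two]; simp
  | succ n ih => rw [pow_succ, ih]; simp [pow_succ]

lemma Matrix.fin_two_mul_diagonal_mul_mulVec_apply {R : Type*} [CommRing R]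
    (J K : Matrix (Fin 2) (Fin 2) R) (p q : R) (v : Fin 2 → R) (i : Fin 2) :
    ((J * !![p, 0; 0, q] * K) *ᵥ v) i = p * (J i 0 * (K *ᵥ v) 0) + q * (J i 1 * (K *ᵥ v) 1) := by
  simp only [mulVec, dotProduct, mul_apply, of_apply, cons_val', cons_val_fin_one, Fin.sum_univ_two,
    cons_val_zero, cons_val_one, mul_zero, add_zero, zero_add]
  ring

lemma fibProd_mulVec {a x : ℕ → ℂ} (hx : ∀ n, x (n + 2) = a n * x (n + 1) + x n) (n : ℕ) :
    fibProd a n *ᵥ ![x 1, x 0] = ![x (n + 1), x n] := by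
  induction n with
  | zero => simp [fibProd]
  | succ n ih =>
    rw [fibProd, ← mulVec_mulVec, ih, hx]
    ext i
    fin_cases i <;> simp [fibMat, mulVec, dotProduct, Fin.sum_univ_two]

lemma fibProd_add (a : ℕ → ℂ) (m n : ℕ) :
    fibProd a (m + n) = fibProd (fun i => a (i + n)) m * fibProd a n := by
  induction m with
  | zero => simp [fibProd]
  | succ m ih =>
    rw [Nat.add_right_comm, fibProd, ih, fibProd, ← Matrix.mul_assoc]
    rfl

lemma Function.Periodic.fibProd_mul {a : ℕ → ℂ} {k : ℕ} (ha : Function.Periodic a k) (n : ℕ) :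
    fibProd a (n * k) = fibProd a k ^ n := by
  induction n with
  | zero => simp [fibProd]
  | succ n ih =>
    have hshift : (fun i => a (i + n * k)) = a := funext (ha.nat_mul n)
    rw [Nat.succ_mul, add_comm, fibProd_add, hshift, ih, pow_succ']

theorem ratio_limit_general (k : ℕ) (a : ℕ → ℂ)
    (ha : ∀ n, a (n + k) = a n) (x : ℕ → ℂ)
    (hx : ∀ n, x (n + 2) = a n * x (n + 1) + x n)
    (Φm Φp : ℂ) (hΦ : ‖Φm‖ < ‖Φp‖)
    (J : Matrix (Fin 2) (Fin 2) ℂ) (hJ : IsUnit J.det)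
    (hC : fibProd a k = J * !![Φm, 0; 0, Φp] * J⁻¹)
    (β γ : ℂ) (hβ : β = J 0 1 * (J⁻¹ 1 0 * x 1 + J⁻¹ 1 1 * x 0))
    (hγ : γ = J 1 1 * (J⁻¹ 1 0 * x 1 + J⁻¹ 1 1 * x 0)) (hγ0 : γ ≠ 0) :
    (∃ N : ℕ, ∀ n ≥ N, x (n * k) ≠ 0) ∧
    Tendsto (fun n : ℕ => x (n * k + 1) / x (n * k)) atTop (nhds (β / γ)) := by
  have hCpow (n : ℕ) : fibProd a (n * k) = J * !![Φm ^ n, 0; 0, Φp ^ n] * J⁻¹ := by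
    rw [Function.Periodic.fibProd_mul ha, hC, ← fin_two_diagonal_pow]
    exact Units.conj_pow (nonsingInvUnit J hJ) _ n
  set c := J⁻¹ *ᵥ ![x 1, x 0]
  have hc : c 1 = J⁻¹ 1 0 * x 1 + J⁻¹ 1 1 * x 0 := by simp [c]
  have hxn (n : ℕ) (i : Fin 2) : ![x (n * k + 1), x (n * k)] i =
      Φm ^ n * (J i 0 * c 0) + Φp ^ n * (J i 1 * c 1) := by
    rw [← fibProd_mulVec hx, hCpow, Matrix.fin_two_mul_diagonal_mul_mulVec_apply]
  have hx0 (n : ℕ) : x (n * k) = Φm ^ n * (J 1 0 * c 0) + Φp ^ n * γ := by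
    simpa [hγ, hc] using hxn n 1
  have hx1 (n : ℕ) : x (n * k + 1) = Φm ^ n * (J 0 0 * c 0) + Φp ^ n * β := by
    simpa [hβ, hc] using hxn n 0
  simp only [hx0, hx1]
  exact ⟨eventually_atTop.mp (eventually_pow_mul_add_pow_mul_ne_zero hΦ _ hγ0),
    tendsto_pow_mul_add_pow_mul_div hΦ _ _ _ hγ0⟩

open Filter in
theorem ratio_limit (k : ℕ) (hk : 1 ≤ k) (a : ℕ → ℂ)
    (ha : ∀ n, a (n + k) = a n) (x : ℕ → ℂ)
    (hx : ∀ n, x (n + 2) = a n * x (n + 1) + x n)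
    (Φm Φp : ℂ) (hΦ : ‖Φm‖ < ‖Φp‖)
    (J : Matrix (Fin 2) (Fin 2) ℂ) (hJ : IsUnit J.det)
    (hC : fibProd a k = J * !![Φm, 0; 0, Φp] * J⁻¹)
    (β γ : ℂ) (hβ : β = J 0 1 * (J⁻¹ 1 0 * x 1 + J⁻¹ 1 1 * x 0))
    (hγ : γ = J 1 1 * (J⁻¹ 1 0 * x 1 + J⁻¹ 1 1 * x 0)) (hγ0 : γ ≠ 0) :
    (∃ N : ℕ, ∀ n ≥ N, x (n * k) ≠ 0) ∧
    Tendsto (fun n : ℕ => x (n * k + 1) / x (n * k)) atTop (nhds (β / γ)) :=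
  ratio_limit_general k a ha x hx Φm Φp hΦ J hJ hC β γ hβ hγ hγ0
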